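/- arXiv:1905.04415 — 3 statements merged into one kernel-verified Lean document; each statement's English description precedes it below -/
import Mathlib

section
/- Let α be a smooth function with α' > 0 on an interval, and suppose u(x) = sin(α(x))/√(α'(x)) and v(x) = cos(α(x))/√(α'(x)) both solve y'' + q·y = 0. Then α' satisfies Kummer's equation: (α'(x))² = q(x) − (1/2)·α'''(x)/α'(x) + (3/4)·(α''(x)/α'(x))². -/
/-- **Kummer's equation.** If `α' > 0` and both `sin(α)/√α'` and `cos(α)/√α'`
solve `y'' + q y = 0` on an open interval, then
`(α')² = q − (1/2) α'''/α' + (3/4) (α''/α')²` there. -/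
theorem kummer_equation (a b : ℝ) (q α α' α'' α''' : ℝ → ℝ)
    (hqc : ContinuousOn q (Set.Ioo a b))
    (hα : ∀ x ∈ Set.Ioo a b, HasDerivAt α (α' x) x)
    (hα' : ∀ x ∈ Set.Ioo a b, HasDerivAt α' (α'' x) x)
    (hα'' : ∀ x ∈ Set.Ioo a b, HasDerivAt α'' (α''' x) x)
    (hpos : ∀ x ∈ Set.Ioo a b, 0 < α' x)
    (hodeu : ∀ x ∈ Set.Ioo a b,
      deriv (deriv (fun t => Real.sin (α t) / Real.sqrt (α' t))) x
        + q x * (Real.sin (α x) / Real.sqrt (α' x)) = 0)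
    (hodev : ∀ x ∈ Set.Ioo a b,
      deriv (deriv (fun t => Real.cos (α t) / Real.sqrt (α' t))) x
        + q x * (Real.cos (α x) / Real.sqrt (α' x)) = 0) :
    ∀ x ∈ Set.Ioo a b,
      (α' x) ^ 2 = q x - (1 / 2) * (α''' x / α' x)
        + (3 / 4) * (α'' x / α' x) ^ 2 := by
  have hS : IsOpen (Set.Ioo a b) := isOpen_Ioo
  -- sqrt positivity
  have hsq : ∀ y ∈ Set.Ioo a b, 0 < Real.sqrt (α' y) :=
    fun y hy => Real.sqrt_pos.2 (hpos y hy)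
  have hds : ∀ y ∈ Set.Ioo a b,
      HasDerivAt (fun t => Real.sqrt (α' t)) (α'' y / (2 * Real.sqrt (α' y))) y :=
    fun y hy => (hα' y hy).sqrt (hpos y hy).ne'
  have hu : ∀ y ∈ Set.Ioo a b,
      HasDerivAt (fun t => Real.sin (α t) / Real.sqrt (α' t))
        ((Real.cos (α y) * α' y * Real.sqrt (α' y)
          - Real.sin (α y) * (α'' y / (2 * Real.sqrt (α' y)))) / Real.sqrt (α' y) ^ 2) y :=
    fun y hy => ((hα y hy).sin.div (hds y hy) (hsq y hy).ne')
  have hv : ∀ y ∈ Set.Ioo a b,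
      HasDerivAt (fun t => Real.cos (α t) / Real.sqrt (α' t))
        ((-Real.sin (α y) * α' y * Real.sqrt (α' y)
          - Real.cos (α y) * (α'' y / (2 * Real.sqrt (α' y)))) / Real.sqrt (α' y) ^ 2) y :=
    fun y hy => ((hα y hy).cos.div (hds y hy) (hsq y hy).ne')
  intro x hx
  have hsx := hsq x hx
  have hdsx := hds x hx
  have hs2 : Real.sqrt (α' x) ^ 2 = α' x := Real.sq_sqrt (hpos x hx).le
  -- second derivative of u
  have hU1 := ((((hα x hx).cos.mul (hα' x hx)).mul hdsx).sub
      ((hα x hx).sin.mul ((hα'' x hx).div (hdsx.const_mul 2)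
        (by positivity)))).div (hdsx.pow 2) (pow_ne_zero 2 hsx.ne')
  have hV1 := (((((hα x hx).sin.neg).mul (hα' x hx)).mul hdsx).sub
      ((hα x hx).cos.mul ((hα'' x hx).div (hdsx.const_mul 2)
        (by positivity)))).div (hdsx.pow 2) (pow_ne_zero 2 hsx.ne')
  have hcu : deriv (deriv (fun t => Real.sin (α t) / Real.sqrt (α' t))) x
      = deriv (fun y => (Real.cos (α y) * α' y * Real.sqrt (α' y)
          - Real.sin (α y) * (α'' y / (2 * Real.sqrt (α' y)))) / Real.sqrt (α' y) ^ 2) x :=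
    Filter.EventuallyEq.deriv_eq
      (Filter.eventuallyEq_of_mem (hS.mem_nhds hx) (fun y hy => (hu y hy).deriv))
  have hcv : deriv (deriv (fun t => Real.cos (α t) / Real.sqrt (α' t))) x
      = deriv (fun y => (-Real.sin (α y) * α' y * Real.sqrt (α' y)
          - Real.cos (α y) * (α'' y / (2 * Real.sqrt (α' y)))) / Real.sqrt (α' y) ^ 2) x :=
    Filter.EventuallyEq.deriv_eq
      (Filter.eventuallyEq_of_mem (hS.mem_nhds hx) (fun y hy => (hv y hy).deriv))
  have e1 := hodeu x hx
  have e2 := hodev x hx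
  rw [hcu] at e1
  erw [hU1.deriv] at e1
  rw [hcv] at e2
  erw [hV1.deriv] at e2
  simp only [Pi.mul_apply, Pi.sub_apply, Pi.div_apply, Pi.pow_apply, Pi.neg_apply, Nat.cast_ofNat, Nat.add_one_sub_one, pow_one] at e1 e2
  set s := Real.sqrt (α' x) with hsdef
  set S := Real.sin (α x)
  set C := Real.cos (α x)
  have pyth : S ^ 2 + C ^ 2 = 1 := Real.sin_sq_add_cos_sq (α x)
  rw [← hs2] at e1 e2 ⊢
  have hsne : s ≠ 0 := hsx.ne'
  field_simp at e1 e2 ⊢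
  linear_combination (-2) * (S * e1 + C * e2) +
    2 * (-4 * s ^ 8 - 2 * s ^ 2 * α''' x + 3 * α'' x ^ 2 + 4 * s ^ 4 * q x) * pyth
end

section
/- Suppose w > 0 is three times differentiable on an interval, satisfies 2w·w'' − (w')² + 4q·w² = 4 identically, and define α by α(x) = α(x₀) + ∫_{x₀}^x dt/w(t). Then u(x) = √(w(x))·sin(α(x)) satisfies u'' + q·u = 0 on the interval. -/
/-- If `w > 0` is three times differentiable and satisfies
`2 w w'' − (w')² + 4 q w² = 4`, and `α(x) = c + ∫_{x₀}^x 1/w`, then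
`u = √w · sin(α)` solves `u'' + q u = 0` on the interval. -/
theorem sqrt_w_sin_solves (a b : ℝ) (x₀ c : ℝ) (hx₀ : x₀ ∈ Set.Ioo a b)
    (q w w' w'' w''' : ℝ → ℝ)
    (hq : ContinuousOn q (Set.Ioo a b))
    (hw : ∀ x ∈ Set.Ioo a b, HasDerivAt w (w' x) x)
    (hw' : ∀ x ∈ Set.Ioo a b, HasDerivAt w' (w'' x) x)
    (hw'' : ∀ x ∈ Set.Ioo a b, HasDerivAt w'' (w''' x) x)
    (hwpos : ∀ x ∈ Set.Ioo a b, 0 < w x)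
    (henergy : ∀ x ∈ Set.Ioo a b,
      2 * w x * w'' x - (w' x) ^ 2 + 4 * q x * (w x) ^ 2 = 4)
    (α u : ℝ → ℝ)
    (hα : ∀ x, α x = c + ∫ t in x₀..x, 1 / w t)
    (hu : ∀ x, u x = Real.sqrt (w x) * Real.sin (α x)) :
    ∀ x ∈ Set.Ioo a b, deriv (deriv u) x + q x * u x = 0 := by
  have hαf : α = fun x => c + ∫ t in x₀..x, 1 / w t := funext hα
  have huf : u = fun x => Real.sqrt (w x) * Real.sin (α x) := funext hu
  have hco : ContinuousOn (fun t => 1 / w t) (Set.Ioo a b) :=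
    ContinuousOn.div continuousOn_const
      (fun t ht => (hw t ht).continuousAt.continuousWithinAt)
      (fun t ht => (hwpos t ht).ne')
  have hαd : ∀ x ∈ Set.Ioo a b, HasDerivAt α (1 / w x) x := by
    intro x hx
    have hsub : Set.uIcc x₀ x ⊆ Set.Ioo a b :=
      (Set.ordConnected_Ioo).uIcc_subset hx₀ hx
    have hint : IntervalIntegrable (fun t => 1 / w t) MeasureTheory.volume x₀ x :=
      (hco.mono hsub).intervalIntegrable
    have hmeas : StronglyMeasurableAtFilter (fun t => 1 / w t) (nhds x) :=
      hco.stronglyMeasurableAtFilter isOpen_Ioo x hx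
    have hct : ContinuousAt (fun t => 1 / w t) x :=
      hco.continuousAt (isOpen_Ioo.mem_nhds hx)
    have := intervalIntegral.integral_hasDerivAt_right hint hmeas hct
    rw [hαf]
    exact this.const_add c
  -- derivative of u
  set v : ℝ → ℝ := fun x =>
    (w' x * Real.sin (α x) + 2 * Real.cos (α x)) / (2 * Real.sqrt (w x)) with hv
  have hud : ∀ x ∈ Set.Ioo a b, HasDerivAt u (v x) x := by
    intro x hx
    have hne := (hwpos x hx).ne'
    have hs : Real.sqrt (w x) ^ 2 = w x := Real.sq_sqrt (hwpos x hx).le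
    have hsne : Real.sqrt (w x) ≠ 0 := (Real.sqrt_pos.mpr (hwpos x hx)).ne'
    have hsq : HasDerivAt (fun y => Real.sqrt (w y)) (1 / (2 * Real.sqrt (w x)) * w' x) x :=
      (Real.hasDerivAt_sqrt hne).comp x (hw x hx)
    have hsin : HasDerivAt (fun y => Real.sin (α y)) (Real.cos (α x) * (1 / w x)) x :=
      (Real.hasDerivAt_sin (α x)).comp x (hαd x hx)
    have := hsq.mul hsin
    rw [huf]
    refine this.congr_deriv ?_
    rw [hv]
    rw [← hs]
    field_simp
    rw [Real.sqrt_sq (Real.sqrt_nonneg _)]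
    ring
  -- derivative of v
  intro x hx
  have hne := (hwpos x hx).ne'
  have hs : Real.sqrt (w x) ^ 2 = w x := Real.sq_sqrt (hwpos x hx).le
  have hsne : Real.sqrt (w x) ≠ 0 := (Real.sqrt_pos.mpr (hwpos x hx)).ne'
  have hsq : HasDerivAt (fun y => Real.sqrt (w y)) (1 / (2 * Real.sqrt (w x)) * w' x) x :=
    (Real.hasDerivAt_sqrt hne).comp x (hw x hx)
  have hsin : HasDerivAt (fun y => Real.sin (α y)) (Real.cos (α x) * (1 / w x)) x :=
    (Real.hasDerivAt_sin (α x)).comp x (hαd x hx)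
  have hcos : HasDerivAt (fun y => Real.cos (α y)) (-Real.sin (α x) * (1 / w x)) x :=
    (Real.hasDerivAt_cos (α x)).comp x (hαd x hx)
  have hN : HasDerivAt (fun y => w' y * Real.sin (α y) + 2 * Real.cos (α y))
      (w'' x * Real.sin (α x) + w' x * (Real.cos (α x) * (1 / w x))
        + 2 * (-Real.sin (α x) * (1 / w x))) x :=
    ((hw' x hx).mul hsin).add (hcos.const_mul 2)
  have hD : HasDerivAt (fun y => 2 * Real.sqrt (w y))
      (2 * (1 / (2 * Real.sqrt (w x)) * w' x)) x :=
    hsq.const_mul 2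
  have hDne : (2 : ℝ) * Real.sqrt (w x) ≠ 0 := by positivity
  have hvd : HasDerivAt v
      (((w'' x * Real.sin (α x) + w' x * (Real.cos (α x) * (1 / w x))
        + 2 * (-Real.sin (α x) * (1 / w x))) * (2 * Real.sqrt (w x))
        - (w' x * Real.sin (α x) + 2 * Real.cos (α x))
          * (2 * (1 / (2 * Real.sqrt (w x)) * w' x)))
        / (2 * Real.sqrt (w x)) ^ 2) x := hN.div hD hDne
  have hEq : deriv u =ᶠ[nhds x] v :=
    Filter.eventually_of_mem (isOpen_Ioo.mem_nhds hx) (fun y hy => (hud y hy).deriv)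
  rw [hEq.deriv_eq, hvd.deriv, hu x]
  have hE := henergy x hx
  rw [← hs] at hE ⊢
  field_simp
  rw [Real.sqrt_sq (Real.sqrt_nonneg _)]
  linear_combination (Real.sin (α x) * Real.sqrt (w x) ^ 2) * hE
end

section
/- If f is completely monotone on (0,∞) and f is not identically zero, then f(x) > 0 for all x > 0. -/
open Set Filter

/-- On a compact interval inside an open set where `g` is smooth, the iterated derivative
within the interval agrees with the global iterated derivative. -/
private lemma idw_eq {g : ℝ → ℝ} {s : Set ℝ} (hs : IsOpen s) (hg : ContDiffOn ℝ (⊤ : ℕ∞) g s)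
    {a b : ℝ} (hab : a < b) (hsub : Set.Icc a b ⊆ s) (n : ℕ) {x : ℝ} (hx : x ∈ Set.Icc a b) :
    iteratedDerivWithin n g (Set.Icc a b) x = iteratedDeriv n g x := by
  have h1 : HasFTaylorSeriesUpToOn ((⊤ : ℕ∞) : WithTop ℕ∞) g (ftaylorSeriesWithin ℝ g s) s :=
    hg.ftaylorSeriesWithin hs.uniqueDiffOn
  have h2 := (h1.mono hsub).eq_iteratedFDerivWithin_of_uniqueDiffOn (m := n) (by exact_mod_cast le_top)
    (uniqueDiffOn_Icc hab) hx
  have h3 : iteratedFDerivWithin ℝ n g s x = iteratedFDeriv ℝ n g x :=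
    iteratedFDerivWithin_of_isOpen n hs (hsub hx)
  rw [iteratedDerivWithin_eq_iteratedFDerivWithin, iteratedDeriv_eq_iteratedFDeriv, ← h2]
  simp only [ftaylorSeriesWithin, h3]

private lemma taylor_exp (f : ℝ → ℝ) (hsmooth : ContDiffOn ℝ (⊤ : ℕ∞) f (Set.Ioi 0))
    {a b : ℝ} (ha : 0 < a) (hab : a < b) (n : ℕ) :
    ∃ ξ ∈ Set.Ioo a b,
      f a = (∑ k ∈ Finset.range (n + 1),
          (b - a) ^ k / (Nat.factorial k) * ((-1 : ℝ) ^ k * iteratedDeriv k f b))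
        + (b - a) ^ (n + 1) / (Nat.factorial (n + 1)) *
            ((-1 : ℝ) ^ (n + 1) * iteratedDeriv (n + 1) f ξ) := by
  set c := a + b with hc
  set g : ℝ → ℝ := fun t => f (c - t) with hg_def
  have hIcc_sub : Set.Icc a b ⊆ Set.Iio c := fun t ht => by
    simp only [Set.mem_Iio]; have := ht.2; simp only [hc]; linarith
  have hgsmooth : ContDiffOn ℝ (⊤ : ℕ∞) g (Set.Iio c) := by
    have hinner : ContDiff ℝ (⊤ : ℕ∞) (fun t : ℝ => c - t) := contDiff_const.sub contDiff_id
    exact hsmooth.comp hinner.contDiffOn (fun t ht => by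
      simp only [Set.mem_Iio] at ht; simp only [Set.mem_Ioi]; linarith)
  have hgderiv : ∀ (k : ℕ) (t : ℝ), iteratedDeriv k g t = (-1 : ℝ) ^ k * iteratedDeriv k f (c - t) := by
    intro k t
    have h2 : g = fun x => (fun z => f (c + z)) (-x) := by
      funext x; simp [hg_def, sub_eq_add_neg]
    rw [h2, iteratedDeriv_comp_neg k (fun z => f (c + z)) t,
      iteratedDeriv_comp_const_add k f c]
    simp [smul_eq_mul, sub_eq_add_neg]
  have hidw : ∀ (k : ℕ) {x : ℝ}, x ∈ Set.Icc a b →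
      iteratedDerivWithin k g (Set.Icc a b) x = iteratedDeriv k g x :=
    fun k x hx => idw_eq isOpen_Iio hgsmooth hab hIcc_sub k hx
  have hgC : ContDiffOn ℝ n g (Set.Icc a b) := (hgsmooth.of_le (by exact_mod_cast le_top)).mono hIcc_sub
  have hgD : DifferentiableOn ℝ (iteratedDerivWithin n g (Set.Icc a b)) (Set.Ioo a b) := by
    refine ((hgsmooth.mono hIcc_sub).differentiableOn_iteratedDerivWithin ?_
      (uniqueDiffOn_Icc hab)).mono Set.Ioo_subset_Icc_self
    exact_mod_cast ENat.coe_lt_top n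
  obtain ⟨ξ₀, hξ₀, heq⟩ := taylor_mean_remainder_lagrange (f := g) (n := n) hab.ne
    (by rwa [Set.uIcc_of_le hab.le]) (by rwa [Set.uIcc_of_le hab.le, Set.uIoo_of_le hab.le])
  rw [Set.uIoo_of_le hab.le] at hξ₀
  rw [Set.uIcc_of_le hab.le] at heq
  refine ⟨c - ξ₀, ⟨by simp only [hc]; linarith [hξ₀.2], by simp only [hc]; linarith [hξ₀.1]⟩, ?_⟩
  have hgb : g b = f a := by simp only [hg_def, hc]; ring_nf
  have htay : taylorWithinEval g n (Set.Icc a b) a b =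
      ∑ k ∈ Finset.range (n + 1),
        (b - a) ^ k / (Nat.factorial k) * ((-1 : ℝ) ^ k * iteratedDeriv k f b) := by
    rw [taylor_within_apply]
    refine Finset.sum_congr rfl (fun k hk => ?_)
    rw [hidw k (Set.left_mem_Icc.mpr hab.le), hgderiv k a]
    have : c - a = b := by simp only [hc]; ring
    rw [this, smul_eq_mul]
    ring
  have hrem : iteratedDerivWithin (n + 1) g (Set.Icc a b) ξ₀ =
      (-1 : ℝ) ^ (n + 1) * iteratedDeriv (n + 1) f (c - ξ₀) := by
    rw [hidw (n + 1) (Set.Ioo_subset_Icc_self hξ₀), hgderiv]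
  rw [hgb, htay, hrem] at heq
  linear_combination heq

private lemma term_le (f : ℝ → ℝ) (hsmooth : ContDiffOn ℝ (⊤ : ℕ∞) f (Set.Ioi 0))
    (hcm : ∀ (k : ℕ), ∀ x > (0 : ℝ), 0 ≤ (-1 : ℝ) ^ k * iteratedDeriv k f x)
    {a b : ℝ} (ha : 0 < a) (hab : a < b) (m : ℕ) :
    (b - a) ^ m / (Nat.factorial m) * ((-1 : ℝ) ^ m * iteratedDeriv m f b) ≤ f a := by
  obtain ⟨ξ, hξ, heq⟩ := taylor_exp f hsmooth ha hab m
  rw [heq]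
  have hterm : ∀ k ∈ Finset.range (m + 1),
      0 ≤ (b - a) ^ k / (Nat.factorial k) * ((-1 : ℝ) ^ k * iteratedDeriv k f b) := fun k _ =>
    mul_nonneg (div_nonneg (pow_nonneg (by linarith) k) (Nat.cast_nonneg _))
      (hcm k b (ha.trans hab))
  have hrem : 0 ≤ (b - a) ^ (m + 1) / (Nat.factorial (m + 1)) *
      ((-1 : ℝ) ^ (m + 1) * iteratedDeriv (m + 1) f ξ) :=
    mul_nonneg (div_nonneg (pow_nonneg (by linarith) _) (Nat.cast_nonneg _))
      (hcm (m + 1) ξ (ha.trans hξ.1))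
  have h1 := Finset.single_le_sum hterm (Finset.self_mem_range_succ m)
  linarith

private lemma iteratedDeriv_zero_fun (k : ℕ) :
    iteratedDeriv k (fun _ : ℝ => (0 : ℝ)) = fun _ => (0 : ℝ) := by
  induction k with
  | zero => simp [iteratedDeriv_zero]
  | succ k ih => rw [iteratedDeriv_succ, ih]; funext x; simp

/-- A completely monotone function on `(0,∞)` which is not identically zero is
strictly positive on `(0,∞)`. -/
theorem completely_monotone_pos (f : ℝ → ℝ)
    (hsmooth : ContDiffOn ℝ (⊤ : ℕ∞) f (Set.Ioi 0))
    (hcm : ∀ (k : ℕ), ∀ x > (0 : ℝ), 0 ≤ (-1 : ℝ) ^ k * iteratedDeriv k f x)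
    (hne : ∃ x₀ > (0 : ℝ), f x₀ ≠ 0) :
    ∀ x > (0 : ℝ), 0 < f x := by
  have hnonneg : ∀ x > (0 : ℝ), 0 ≤ f x := by
    intro x hx; simpa using hcm 0 x hx
  have hanti : ∀ {u v : ℝ}, 0 < u → u < v → f v ≤ f u := by
    intro u v hu huv
    simpa using term_le f hsmooth hcm hu huv 0
  by_contra h
  push_neg at h
  obtain ⟨y₀, hy₀, hy₀le⟩ := h
  have hfy₀ : f y₀ = 0 := le_antisymm hy₀le (hnonneg y₀ hy₀)
  have hzero_up : ∀ b > (0 : ℝ), f b = 0 → ∀ z, b ≤ z → f z = 0 := by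
    intro b hb hfb z hz
    rcases eq_or_lt_of_le hz with rfl | hlt
    · exact hfb
    · exact le_antisymm (hfb ▸ hanti hb hlt) (hnonneg z (hb.trans hlt))
  have hzero_down : ∀ b > (0 : ℝ), f b = 0 → ∀ y, 3 * b / 4 < y → y < b → f y = 0 := by
    intro b hb hfb y hy1 hy2
    have hy : 0 < y := by linarith
    set d := b - y with hd
    have hdpos : 0 < d := by simp only [hd]; linarith
    set a := y - 3 * d with hadef
    have hapos : 0 < a := by simp only [hadef, hd]; linarith
    have hay : a < y := by simp only [hadef]; linarith
    set b' := y + 2 * d with hb'def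
    have hbb' : b < b' := by simp only [hb'def, hd]; linarith
    have hyb' : y < b' := by simp only [hb'def]; linarith
    have hFb' : ∀ k, iteratedDeriv k f b' = 0 := by
      intro k
      have hev : f =ᶠ[nhds b'] (fun _ => (0 : ℝ)) := by
        filter_upwards [Ioi_mem_nhds hbb'] with z hz
        exact hzero_up b hb hfb z hz.le
      rw [hev.iteratedDeriv_eq k, iteratedDeriv_zero_fun]
    have key : ∀ n : ℕ, f y ≤ (2 / 3 : ℝ) ^ (n + 1) * f a := by
      intro n
      obtain ⟨ξ, hξ, heq⟩ := taylor_exp f hsmooth hy hyb' n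
      have hsum0 : (∑ k ∈ Finset.range (n + 1),
          (b' - y) ^ k / (Nat.factorial k) * ((-1 : ℝ) ^ k * iteratedDeriv k f b')) = 0 :=
        Finset.sum_eq_zero fun k _ => by rw [hFb' k]; ring
      rw [hsum0, zero_add] at heq
      have hbound := term_le f hsmooth hcm hapos (hay.trans hξ.1) (n + 1)
      set Fv := (-1 : ℝ) ^ (n + 1) * iteratedDeriv (n + 1) f ξ with hFv
      have hFnn : 0 ≤ Fv := hcm (n + 1) ξ (hy.trans hξ.1)
      have h3d : 3 * d ≤ ξ - a := by
        have := hξ.1; simp only [hadef] at *; linarith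
      have hle : (3 * d) ^ (n + 1) / (Nat.factorial (n + 1)) * Fv ≤ f a := by
        refine le_trans ?_ hbound
        gcongr
      have hby' : b' - y = 2 * d := by simp only [hb'def]; ring
      rw [hby'] at heq
      rw [heq]
      have h23 : (2 * d) ^ (n + 1) = (2 / 3 : ℝ) ^ (n + 1) * (3 * d) ^ (n + 1) := by
        rw [← mul_pow]; ring_nf
      rw [h23]
      calc (2 / 3 : ℝ) ^ (n + 1) * (3 * d) ^ (n + 1) / (Nat.factorial (n + 1)) * Fv
          = (2 / 3 : ℝ) ^ (n + 1) * ((3 * d) ^ (n + 1) / (Nat.factorial (n + 1)) * Fv) := by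
            ring
        _ ≤ (2 / 3 : ℝ) ^ (n + 1) * f a := by
            exact mul_le_mul_of_nonneg_left hle (by positivity)
    have htend : Tendsto (fun n : ℕ => (2 / 3 : ℝ) ^ (n + 1) * f a) atTop (nhds 0) := by
      have h1 : Tendsto (fun n : ℕ => (2 / 3 : ℝ) ^ n) atTop (nhds 0) :=
        tendsto_pow_atTop_nhds_zero_of_lt_one (by norm_num) (by norm_num)
      have h2 := (h1.comp (tendsto_add_atTop_nat 1)).mul_const (f a)
      simpa using h2
    have hle0 : f y ≤ 0 := ge_of_tendsto' htend key
    exact le_antisymm hle0 (hnonneg y hy)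
  have hseq : ∀ n : ℕ, f ((7 / 8 : ℝ) ^ n * y₀) = 0 := by
    intro n
    induction n with
    | zero => simpa using hfy₀
    | succ n ih =>
      have hbn : 0 < (7 / 8 : ℝ) ^ n * y₀ := by positivity
      refine hzero_down _ hbn ih ((7 / 8 : ℝ) ^ (n + 1) * y₀) ?_ ?_
      · rw [pow_succ]; nlinarith
      · rw [pow_succ]; nlinarith
  obtain ⟨x₀, hx₀, hfx₀⟩ := hne
  obtain ⟨n, hn⟩ : ∃ n : ℕ, (7 / 8 : ℝ) ^ n * y₀ < x₀ := by
    obtain ⟨n, hn⟩ := exists_pow_lt_of_lt_one (div_pos hx₀ hy₀) (by norm_num : (7 / 8 : ℝ) < 1)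
    exact ⟨n, by rw [← lt_div_iff₀ hy₀] at *; exact hn⟩
  exact hfx₀ (hzero_up _ (by positivity) (hseq n) x₀ hn.le)
end
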